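/- Let 𝐑 = R[x][y_{i,j}] with the ∂-action (∂·y_{i,j}=y_{i,j+1}, product rule with α,β,γ ∈ {0,1,−1}, and ∂ acting on R[x] via σ and δ not increasing x-degree). Let P ∈ 𝐑 have y-multi-degree (D_1,…,D_n) ≠ (0,…,0), and suppose c bounds heights under σ, δ as usual. Then for k ∈ ℕ: (i) the maximal second index of variables y_{i,j} in ∂^k·P increases by at most k in each group; (ii) the y-multi-degree of ∂^k·P is at most (D_1,…,D_n) componentwise; (iii) deg_x(∂^k·P) ≤ deg_x(P); (iv) h(∂^k·P) ≤ k·h(4)·Σ_i D_i + c^{(k)}(deg_x(P), h(P)). -/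

import Mathlib

open Polynomial

/-- A height function on an integral domain `R`. -/
structure HeightFn (R : Type*) [CommRing R] where
  h : R → ℝ
  h_zero : h 0 = 0
  h_nonneg : ∀ a, 0 ≤ h a
  h_neg : ∀ a, h (-a) = h a
  h_mul : ∀ a b, h (a * b) ≤ h a + h b
  h_sum : ∀ (n : ℕ) (f : Fin n → R) (B : ℝ), 0 ≤ B → (∀ i, h (f i) ≤ B) →
    h (∑ i, f i) ≤ h ((n - 1 : ℕ) : R) + B

namespace HeightFn

variable {R : Type*} [CommRing R] (H : HeightFn R)

/-- Height of a natural number, viewed inside `R`. -/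
def hN (n : ℕ) : ℝ := H.h (n : R)

/-- Height of a polynomial: the maximum height of its coefficients. -/
def hp (p : R[X]) : ℝ := p.support.fold max 0 fun i => H.h (p.coeff i)

end HeightFn

open Polynomial

namespace DFinite

variable {R : Type*} [CommRing R] {n : ℕ}

/-- The ring `𝐑 = R[x][y_{i,j} : i = 1..n, j ≥ 0]`. -/
abbrev MvR (R : Type*) [CommRing R] (n : ℕ) := MvPolynomial (Fin n × ℕ) (Polynomial R)

/-- The `x`-degree of an element of `𝐑`. -/
noncomputable def degx (P : MvR R n) : ℕ := P.support.sup fun m => (MvPolynomial.coeff m P).natDegree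

/-- The height (with respect to a height function on `R`) of an element of `𝐑`:
the maximum height of all elements of `R` appearing as coefficients. -/
noncomputable def mvHeight (H : HeightFn R) (P : MvR R n) : ℝ :=
  P.support.fold max 0 fun m => H.hp (MvPolynomial.coeff m P)

/-- The total degree of a monomial in the `i`-th group `y_{i,0}, y_{i,1}, …` of
variables. -/
def gdeg (i : Fin n) (m : (Fin n × ℕ) →₀ ℕ) : ℕ := m.sum fun v e => if v.1 = i then e else 0

/-- `P` is homogeneous of multi-degree `Dv`, i.e. homogeneous of degree `Dv i` with
respect to each group `y_{i,0}, y_{i,1}, …` of variables. -/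
def GHomog (P : MvR R n) (Dv : Fin n → ℕ) : Prop :=
  ∀ m ∈ P.support, ∀ i, gdeg i m = Dv i

end DFinite

/-- `k`-fold iteration of `c` in its second argument. -/
def citer (c : ℝ → ℝ → ℝ) : ℕ → ℝ → ℝ → ℝ
  | 0, _, b => b
  | k + 1, a, b => c a (citer c k a b)

/-!
Write `P = ∑ₘ pₘ yᵐ`, so that `∂ · P = ∑ₘ (σ(pₘ) (∂ · yᵐ) + δ(pₘ) yᵐ)`. By the product rule, and
since `∂ · 1` is `0` or `±1`, each `∂ · yᵐ` is the image of an integer polynomial whose monomials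
arise from `yᵐ` by raising the second index of some of its variables, and whose coefficients are
at most `2 (2 ^ r - 1)` in absolute value, `r = |m| ≥ 1`. Raising indices keeps every group degree,
which gives (i) and (ii). At most `2 ^ r` monomials shift onto a given one, so every coefficient
of `∂ · P` is a sum of at most `5 ^ (∑ Dᵢ)` terms `±σ(f)` or `δ(f)`, `f` running over coefficients
of `P`. Iterating, a coefficient of `∂^k · P` is a sum of at most `5 ^ (k ∑ Dᵢ)` polynomials of
`x`-degree at most `deg_x P` and height at most `c^{(k)}(deg_x P, h(P))`; splitting such a sum
into five blocks at each of the `k ∑ Dᵢ` levels costs `h(4)` per level.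
-/

open Pointwise

namespace Set

lemma map_mem_nsmul {M M' F : Type*} [AddMonoid M] [AddMonoid M'] [FunLike F M M']
    [AddMonoidHomClass F M M'] (f : F) {T : Set M} {T' : Set M'} (hf : f '' T ⊆ T') {N : ℕ}
    {x : M} (hx : x ∈ N • T) : f x ∈ N • T' :=
  nsmul_subset_nsmul_left hf (image_nsmul f T N ▸ mem_image_of_mem f hx)

lemma sum_mem_nsmul {ι M : Type*} [AddCommMonoid M] {T : Set M} {s : Finset ι} {x : ι → M}
    {N : ι → ℕ} (h : ∀ i ∈ s, x i ∈ N i • T) : ∑ i ∈ s, x i ∈ (∑ i ∈ s, N i) • T := by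
  rw [← Finset.sum_nsmul_assoc]
  exact finsetSum_mem_finsetSum _ _ _ h

variable {M : Type*} [AddCommGroup M] {T : Set M} {N : ℕ} {x : M}

lemma neg_mem_nsmul (hT : ∀ y ∈ T, -y ∈ T) (hx : x ∈ N • T) : -x ∈ N • T :=
  map_mem_nsmul (negAddMonoidHom : M →+ M) (by rintro _ ⟨y, hy, rfl⟩; exact hT y hy) hx

lemma zsmul_mem_nsmul (hT : ∀ y ∈ T, -y ∈ T) (hx : x ∈ N • T) (z : ℤ) :
    z • x ∈ (z.natAbs * N) • T := by
  obtain ⟨n, rfl | rfl⟩ := Int.eq_nat_or_neg z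
  · rw [Int.natAbs_natCast, mul_nsmul', natCast_zsmul]
    exact nsmul_mem_nsmul hx
  · rw [Int.natAbs_neg, Int.natAbs_natCast, mul_nsmul', neg_zsmul, natCast_zsmul, ← smul_neg]
    exact nsmul_mem_nsmul (neg_mem_nsmul hT hx)

end Set

lemma Polynomial.natDegree_le_of_mem_nsmul {R : Type*} [Semiring R] {T : Set R[X]} {d N : ℕ}
    (hT : ∀ q ∈ T, q.natDegree ≤ d) {p : R[X]} (hp : p ∈ N • T) : p.natDegree ≤ d := by
  obtain ⟨f, rfl⟩ := Set.mem_nsmul.mp hp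
  rw [List.sum_ofFn]
  exact natDegree_sum_le_of_forall_le _ _ fun i _ => hT _ (f i).2

namespace HeightFn

variable {R : Type*} [CommRing R] (H : HeightFn R)

lemma hp_nonneg (p : R[X]) : 0 ≤ H.hp p :=
  (Finset.le_fold_max 0).mpr (Or.inl le_rfl)

lemma h_coeff_le_hp (p : R[X]) (u : ℕ) : H.h (p.coeff u) ≤ H.hp p := by
  by_cases hu : u ∈ p.support
  · exact (Finset.le_fold_max _).mpr (Or.inr ⟨u, hu, le_rfl⟩)
  · rw [Polynomial.notMem_support_iff.mp hu, H.h_zero]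
    exact H.hp_nonneg p

lemma hp_le {p : R[X]} {B : ℝ} (hB : 0 ≤ B) (h : ∀ u, H.h (p.coeff u) ≤ B) : H.hp p ≤ B :=
  (Finset.fold_max_le B).mpr ⟨hB, fun u _ => h u⟩

lemma hp_zero : H.hp 0 = 0 := by
  simp [hp]

lemma hp_neg (p : R[X]) : H.hp (-p) = H.hp p := by
  simp [hp, H.h_neg]

lemma hp_sum_le {q : ℕ} (f : Fin q → R[X]) {B : ℝ} (hB : 0 ≤ B) (hf : ∀ i, H.hp (f i) ≤ B) :
    H.hp (∑ i, f i) ≤ H.hN (q - 1) + B :=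
  H.hp_le (add_nonneg (H.h_nonneg _) hB) fun u => by
    rw [Polynomial.finsetSum_coeff]
    exact H.h_sum q _ B hB fun i => (H.h_coeff_le_hp _ u).trans (hf i)

/-- A sum of `5 ^ (t + 1)` terms is a sum of five sums of `5 ^ t` terms, so each of the `t`
levels costs `h(5 - 1)`. -/
lemma hp_le_of_mem_five_pow_nsmul {B : ℝ} (hB : 0 ≤ B) (t : ℕ) {p : R[X]}
    (hp : p ∈ 5 ^ t • {q | H.hp q ≤ B}) : H.hp p ≤ t * H.hN 4 + B := by
  induction t generalizing p with
  | zero => simpa using hp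
  | succ t ih =>
    rw [pow_succ, mul_nsmul, Set.mem_nsmul] at hp
    obtain ⟨f, rfl⟩ := hp
    have hsum : H.hp (∑ i, (f i : R[X])) ≤ H.hN 4 + (t * H.hN 4 + B) :=
      H.hp_sum_le _ (add_nonneg (mul_nonneg t.cast_nonneg (H.h_nonneg _)) hB) fun i => ih (f i).2
    rw [List.sum_ofFn]
    push_cast
    linarith

def smallPolys (d : ℕ) (B : ℝ) : Set R[X] := {p | p.natDegree ≤ d ∧ H.hp p ≤ B}

lemma zero_mem_smallPolys {d : ℕ} {B : ℝ} (hB : 0 ≤ B) : 0 ∈ H.smallPolys d B :=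
  ⟨by simp, by rw [hp_zero]; exact hB⟩

lemma neg_mem_smallPolys {d : ℕ} {B : ℝ} {p : R[X]} (hp : p ∈ H.smallPolys d B) :
    -p ∈ H.smallPolys d B :=
  ⟨by rw [natDegree_neg]; exact hp.1, by rw [hp_neg]; exact hp.2⟩

end HeightFn

namespace Int

lemma natAbs_smul_le {a z : ℤ} (ha : a.natAbs ≤ 1) : (a • z).natAbs ≤ z.natAbs := by
  rw [smul_eq_mul, natAbs_mul]
  exact (Nat.mul_le_mul_right _ ha).trans (one_mul _).le

end Int

namespace MvPolynomial

variable {σ : Type*}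

lemma natAbs_coeff_mul_X_le {F : MvPolynomial σ ℤ} {e : ℕ}
    (hF : ∀ u, (F.coeff u).natAbs ≤ e) (w : σ) (u : σ →₀ ℕ) :
    ((F * X w).coeff u).natAbs ≤ e := by
  classical
  rw [coeff_mul_X']
  split_ifs
  exacts [hF _, Nat.zero_le _]

lemma natAbs_coeff_monomial_one_le (m u : σ →₀ ℕ) :
    ((monomial m (1 : ℤ)).coeff u).natAbs ≤ 1 := by
  classical
  rw [coeff_monomial]
  split_ifs <;> simp

lemma natAbs_coeff_productRule_le {α β γ : ℤ} (hα : α.natAbs ≤ 1) (hβ : β.natAbs ≤ 1)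
    (hγ : γ.natAbs ≤ 1) {F : MvPolynomial σ ℤ} {e : ℕ} (hF : ∀ u, (F.coeff u).natAbs ≤ e)
    (w₁ w₂ : σ) (u₁ u₂ m : σ →₀ ℕ) :
    ((α • (F * X w₁) + β • (F * X w₂) + β • monomial u₁ 1 + γ • monomial u₂ 1).coeff m).natAbs
      ≤ 2 * e + 2 := by
  simp only [coeff_add, coeff_smul]
  have h₁ := (Int.natAbs_smul_le hα).trans (natAbs_coeff_mul_X_le hF w₁ m)
  have h₂ := (Int.natAbs_smul_le hβ).trans (natAbs_coeff_mul_X_le hF w₂ m)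
  have h₃ := (Int.natAbs_smul_le hβ).trans (natAbs_coeff_monomial_one_le u₁ m)
  have h₄ := (Int.natAbs_smul_le hγ).trans (natAbs_coeff_monomial_one_le u₂ m)
  have := Int.natAbs_add_le
  omega

end MvPolynomial

namespace DFinite

section Shifts

variable {ι : Type*}

def shiftIdx (v : ι × ℕ) : ι × ℕ := (v.1, v.2 + 1)

lemma shiftIdx_injective : Function.Injective (shiftIdx (ι := ι)) := by
  rintro ⟨i, j⟩ ⟨i', j'⟩ h
  simp_all [shiftIdx]

noncomputable def shift (t : ι × ℕ →₀ ℕ) : ι × ℕ →₀ ℕ := t.mapDomain shiftIdx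

/-- Every monomial `m'` occurring in `∂ · y^m` satisfies `ShiftsTo m m'`. -/
def ShiftsTo (m m' : ι × ℕ →₀ ℕ) : Prop := ∃ a t, m = a + t ∧ m' = a + shift t

variable {m m' : ι × ℕ →₀ ℕ}

lemma ShiftsTo.refl (m : ι × ℕ →₀ ℕ) : ShiftsTo m m :=
  ⟨m, 0, by simp, by simp [shift]⟩

lemma ShiftsTo.add_single (h : ShiftsTo m m') (v : ι × ℕ) :
    ShiftsTo (m + Finsupp.single v 1) (m' + Finsupp.single v 1) := by
  obtain ⟨a, t, rfl, rfl⟩ := h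
  exact ⟨a + Finsupp.single v 1, t, add_right_comm _ _ _, add_right_comm _ _ _⟩

lemma ShiftsTo.add_single_shiftIdx (h : ShiftsTo m m') (v : ι × ℕ) :
    ShiftsTo (m + Finsupp.single v 1) (m' + Finsupp.single (shiftIdx v) 1) := by
  obtain ⟨a, t, rfl, rfl⟩ := h
  refine ⟨a, t + Finsupp.single v 1, add_assoc _ _ _, ?_⟩
  simp only [shift, Finsupp.mapDomain_add, Finsupp.mapDomain_single, add_assoc]

lemma ShiftsTo.degree_eq (h : ShiftsTo m m') : m.degree = m'.degree := by
  obtain ⟨a, t, rfl, rfl⟩ := h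
  simp [shift, Finsupp.degree_mapDomain]

lemma ShiftsTo.exists_mem_support (h : ShiftsTo m m') {v : ι × ℕ} (hv : v ∈ m'.support) :
    ∃ w ∈ m.support, w.1 = v.1 ∧ v.2 ≤ w.2 + 1 := by
  classical
  obtain ⟨a, t, rfl, rfl⟩ := h
  rcases Finset.mem_union.mp (Finsupp.support_add hv) with ha | ht
  · refine ⟨v, ?_, rfl, by omega⟩
    simp only [Finsupp.mem_support_iff, Finsupp.add_apply] at ha ⊢
    omega
  · obtain ⟨w, hw, rfl⟩ := Finset.mem_image.mp (Finsupp.mapDomain_support ht)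
    refine ⟨w, ?_, rfl, le_rfl⟩
    simp only [Finsupp.mem_support_iff, Finsupp.add_apply] at hw ⊢
    omega

lemma ShiftsTo.gdeg_eq {n : ℕ} {m m' : Fin n × ℕ →₀ ℕ} (h : ShiftsTo m m') (i : Fin n) :
    gdeg i m = gdeg i m' := by
  obtain ⟨a, t, rfl, rfl⟩ := h
  have hadd : ∀ b c : Fin n × ℕ →₀ ℕ, gdeg i (b + c) = gdeg i b + gdeg i c := fun b c =>
    Finsupp.sum_add_index' (fun _ => by simp) fun _ _ _ => by split <;> simp
  have hshift : gdeg i (shift t) = gdeg i t :=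
    Finsupp.sum_mapDomain_index (fun _ => by simp) fun _ _ _ => by split <;> simp
  rw [hadd, hadd, hshift]

lemma degree_eq_sum_gdeg {n : ℕ} (m : Fin n × ℕ →₀ ℕ) : m.degree = ∑ i, gdeg i m := by
  simp only [Finsupp.degree_apply, gdeg, Finsupp.sum]
  rw [Finset.sum_comm]
  simp

lemma card_Iic_le_two_pow_degree [DecidableEq ι] (m : ι × ℕ →₀ ℕ) :
    (Finset.Iic m).card ≤ 2 ^ m.degree := by
  rw [Finsupp.card_Iic, Finsupp.degree_apply, ← Finset.prod_pow_eq_pow_sum]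
  exact Finset.prod_le_prod' fun v _ => by
    rw [Nat.card_Iic]
    exact Nat.lt_two_pow_self

/-- A monomial that shifts to `m'` is determined by its unshifted part `a ≤ m'`. -/
lemma card_le_two_pow_of_shiftsTo {S : Finset (ι × ℕ →₀ ℕ)} (hS : ∀ m ∈ S, ShiftsTo m m') :
    S.card ≤ 2 ^ m'.degree := by
  classical
  set unshift := fun a => a + Finsupp.comapDomain shiftIdx (m' - a) shiftIdx_injective.injOn
  have hsub : S ⊆ (Finset.Iic m').image unshift := fun m hm => by
    obtain ⟨a, t, rfl, rfl⟩ := hS m hm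
    refine Finset.mem_image.mpr ⟨a, Finset.mem_Iic.mpr le_self_add, ?_⟩
    simp only [unshift, add_tsub_cancel_left, shift,
      Finsupp.comapDomain_mapDomain _ shiftIdx_injective]
  calc S.card ≤ ((Finset.Iic m').image unshift).card := Finset.card_le_card hsub
    _ ≤ (Finset.Iic m').card := Finset.card_image_le
    _ ≤ 2 ^ m'.degree := card_Iic_le_two_pow_degree m'

end Shifts

/-- The value `1` at `r = 0` accounts for `∂ · 1 ∈ {0, 1, -1}`. -/
def coeffBound (r : ℕ) : ℕ := max 1 (2 * (2 ^ r - 1))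

lemma coeffBound_succ {r : ℕ} (hr : r ≠ 0) : coeffBound (r + 1) = 2 * coeffBound r + 2 := by
  have h2 : 2 ≤ 2 ^ r := Nat.le_self_pow hr 2
  rw [coeffBound, coeffBound, pow_succ]
  omega

lemma two_pow_mul_coeffBound_add_one_le {r s : ℕ} (hr : r ≤ s) (hs : 1 ≤ s) :
    2 ^ r * coeffBound r + 1 ≤ 5 ^ s := by
  have key : ∀ r, 2 ^ r * (2 * (2 ^ r - 1)) + 1 ≤ 5 ^ r := by
    intro r
    induction r with
    | zero => simp
    | succ r ih =>
      obtain ⟨u, hu⟩ : ∃ u, 2 ^ r = u + 1 :=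
        ⟨2 ^ r - 1, (Nat.sub_add_cancel Nat.one_le_two_pow).symm⟩
      have h2 : 2 ^ (r + 1) - 1 = 2 * u + 1 := by rw [pow_succ, hu]; omega
      rw [hu, add_tsub_cancel_right] at ih
      rw [h2, pow_succ, hu, pow_succ]
      nlinarith [Nat.le_mul_self u]
  rcases Nat.eq_zero_or_pos r with rfl | hr0
  · calc 2 ^ 0 * coeffBound 0 + 1 = 2 := by simp [coeffBound]
      _ ≤ 5 ^ s := (by norm_num : 2 ≤ 5).trans (Nat.le_self_pow (by omega) 5)
  · have h2 : 2 ≤ 2 ^ r := Nat.le_self_pow hr0.ne' 2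
    have hmax : coeffBound r = 2 * (2 ^ r - 1) := by rw [coeffBound]; omega
    rw [hmax]
    exact (key r).trans (Nat.pow_le_pow_right (by norm_num) hr)

section IntModel

variable {ι A : Type*} [CommRing A] (D : MvPolynomial (ι × ℕ) A →+ MvPolynomial (ι × ℕ) A)
  {α β γ : ℤ}

/-- Multiplicities are bounded in `ℤ` rather than in `A`, where the images of integers carry no
size information. -/
def IsIntModel (m : ι × ℕ →₀ ℕ) (F : MvPolynomial (ι × ℕ) ℤ) : Prop :=
  D (MvPolynomial.monomial m 1) = MvPolynomial.map (Int.castRingHom A) F ∧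
    (∀ m', (F.coeff m').natAbs ≤ coeffBound m.degree) ∧ ∀ m' ∈ F.support, ShiftsTo m m'

lemma isIntModel_zero {ε : ℤ} (hε : ε.natAbs ≤ 1) (h1 : D 1 = MvPolynomial.C (ε : A)) :
    IsIntModel D 0 (MvPolynomial.C ε) := by
  classical
  refine ⟨by simpa using h1, fun m' => ?_, fun m' hm' => ?_⟩
  · rw [MvPolynomial.coeff_C]
    split_ifs <;> simp [coeffBound, hε]
  · rw [MvPolynomial.mem_support_iff, MvPolynomial.coeff_C] at hm'
    rw [← (ite_ne_right_iff.mp hm').1]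
    exact ShiftsTo.refl 0

lemma isIntModel_single (hX : ∀ i j, D (MvPolynomial.X (i, j)) = MvPolynomial.X (i, j + 1))
    (v : ι × ℕ) : IsIntModel D (Finsupp.single v 1) (MvPolynomial.X (shiftIdx v)) := by
  classical
  refine ⟨by simpa [MvPolynomial.X, shiftIdx] using hX v.1 v.2, fun m' => ?_, fun m' hm' => ?_⟩
  · rw [MvPolynomial.coeff_X]
    split_ifs <;> simp [coeffBound]
  · rw [MvPolynomial.support_X, Finset.mem_singleton] at hm'
    simpa [hm'] using (ShiftsTo.refl 0).add_single_shiftIdx v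

/-- The product rule applied to `y^m · y_v`. -/
lemma IsIntModel.add_single (hα : α.natAbs ≤ 1) (hβ : β.natAbs ≤ 1) (hγ : γ.natAbs ≤ 1)
    (hX : ∀ i j, D (MvPolynomial.X (i, j)) = MvPolynomial.X (i, j + 1))
    (hmul : ∀ P Q, D (P * Q) = α • (D P * D Q) + β • (D P * Q + P * D Q) + γ • (P * Q))
    {m : ι × ℕ →₀ ℕ} {F : MvPolynomial (ι × ℕ) ℤ} (hF : IsIntModel D m F) (hm : m ≠ 0)
    (v : ι × ℕ) :
    IsIntModel D (m + Finsupp.single v 1)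
      (α • (F * MvPolynomial.X (shiftIdx v)) + β • (F * MvPolynomial.X v) +
        β • MvPolynomial.monomial (m + Finsupp.single (shiftIdx v) 1) 1 +
        γ • MvPolynomial.monomial (m + Finsupp.single v 1) 1) := by
  classical
  obtain ⟨hD, hcoeff, hsupp⟩ := hF
  refine ⟨?_, fun m' => ?_, fun m' hm' => ?_⟩
  · have hXv : D (MvPolynomial.X v) = MvPolynomial.X (shiftIdx v) := hX v.1 v.2
    rw [MvPolynomial.monomial_add_single, pow_one, hmul, hD, hXv]
    simp only [map_add, map_zsmul, map_mul, MvPolynomial.map_X, MvPolynomial.map_monomial,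
      map_one, MvPolynomial.monomial_add_single, pow_one, smul_add]
    abel
  · have hm0 : m.degree ≠ 0 := by rwa [Ne, Finsupp.degree_eq_zero_iff]
    rw [map_add, Finsupp.degree_single, coeffBound_succ hm0]
    exact MvPolynomial.natAbs_coeff_productRule_le hα hβ hγ hcoeff _ _ _ _ m'
  · have hmulX : ∀ w, m' ∈ (F * MvPolynomial.X w).support →
        ∃ u ∈ F.support, u + Finsupp.single w 1 = m' := fun w hw => by
      rw [MvPolynomial.support_mul_X, Finset.mem_map] at hw
      simpa using hw
    have hmono : ∀ u : ι × ℕ →₀ ℕ, m' ∈ (MvPolynomial.monomial u (1 : ℤ)).support → m' = u :=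
      fun u hu => Finset.mem_singleton.mp (MvPolynomial.support_monomial_subset hu)
    rcases Finset.mem_union.mp (MvPolynomial.support_add hm') with h | h
    · rcases Finset.mem_union.mp (MvPolynomial.support_add h) with h | h
      · rcases Finset.mem_union.mp (MvPolynomial.support_add h) with h | h
        · obtain ⟨u, hu, rfl⟩ := hmulX _ (MvPolynomial.support_smul h)
          exact (hsupp u hu).add_single_shiftIdx v
        · obtain ⟨u, hu, rfl⟩ := hmulX _ (MvPolynomial.support_smul h)
          exact (hsupp u hu).add_single v
      · rw [hmono _ (MvPolynomial.support_smul h)]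
        exact (ShiftsTo.refl m).add_single_shiftIdx v
    · rw [hmono _ (MvPolynomial.support_smul h)]
      exact (ShiftsTo.refl m).add_single v

theorem exists_isIntModel (hα : α.natAbs ≤ 1) (hβ : β.natAbs ≤ 1) (hγ : γ.natAbs ≤ 1)
    (hX : ∀ i j, D (MvPolynomial.X (i, j)) = MvPolynomial.X (i, j + 1))
    (hmul : ∀ P Q, D (P * Q) = α • (D P * D Q) + β • (D P * Q + P * D Q) + γ • (P * Q))
    {ε : ℤ} (hε : ε.natAbs ≤ 1) (h1 : D 1 = MvPolynomial.C (ε : A)) (m : ι × ℕ →₀ ℕ) :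
    ∃ F, IsIntModel D m F := by
  classical
  obtain ⟨s, rfl⟩ := Multiset.toFinsupp.surjective m
  induction s using Multiset.induction_on with
  | empty => exact ⟨_, by simpa using isIntModel_zero D hε h1⟩
  | cons v s ih =>
    obtain ⟨F, hF⟩ := ih
    rw [← Multiset.singleton_add, Multiset.toFinsupp_add, Multiset.toFinsupp_singleton, add_comm]
    by_cases hs : Multiset.toFinsupp s = 0
    · rw [hs, zero_add]
      exact ⟨_, isIntModel_single D hX v⟩
    · exact ⟨_, hF.add_single D hα hβ hγ hX hmul hs v⟩

/-- Apply the product rule to `1 · y_{i₀,J}`, with `J` so large that `y_{i₀,J}` and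
`y_{i₀,J+1}` do not occur in `∂ · 1`, and substitute `0, 1` and `1, 0` for these two variables. -/
theorem exists_apply_one_eq_C (i₀ : ι) (hα : α = 0 ∨ α = 1 ∨ α = -1)
    (hβ : β = 0 ∨ β = 1 ∨ β = -1) (hγ : γ = 0 ∨ γ = 1 ∨ γ = -1)
    (hX : ∀ i j, D (MvPolynomial.X (i, j)) = MvPolynomial.X (i, j + 1))
    (hmul : ∀ P Q, D (P * Q) = α • (D P * D Q) + β • (D P * Q + P * D Q) + γ • (P * Q)) :
    ∃ ε : ℤ, ε.natAbs ≤ 1 ∧ D 1 = MvPolynomial.C (ε : A) := by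
  classical
  set E := D 1
  obtain ⟨J, hJ⟩ : ∃ J, ∀ w ∈ E.vars, w.2 < J :=
    ⟨E.vars.sup Prod.snd + 1, fun w hw => Nat.lt_succ_of_le (Finset.le_sup (f := Prod.snd) hw)⟩
  have key : MvPolynomial.X (i₀, J + 1) =
      α • (E * MvPolynomial.X (i₀, J + 1)) +
        β • (E * MvPolynomial.X (i₀, J) + MvPolynomial.X (i₀, J + 1)) +
        γ • MvPolynomial.X (i₀, J) := by
    simpa [hX] using hmul 1 (MvPolynomial.X (i₀, J))
  let φ (a b : MvPolynomial (ι × ℕ) A) : MvPolynomial (ι × ℕ) A →ₐ[A] MvPolynomial (ι × ℕ) A :=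
    MvPolynomial.aeval (Function.update (Function.update MvPolynomial.X (i₀, J) a) (i₀, J + 1) b)
  have hfix : ∀ a b, φ a b E = E := by
    intro a b
    conv_rhs => rw [← MvPolynomial.aeval_X_left_apply E]
    rw [MvPolynomial.aeval_def, MvPolynomial.aeval_def]
    refine MvPolynomial.eval₂_congr _ _ _ fun {w c} hw hc => ?_
    have := hJ w ((MvPolynomial.mem_vars_iff_mem_support w).mpr
      ⟨c, MvPolynomial.mem_support_iff.mpr hc, hw⟩)
    rw [Function.update_of_ne (by grind), Function.update_of_ne (by grind)]
  have h₁ := congrArg (φ 0 1) key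
  have h₂ := congrArg (φ 1 0) key
  simp only [map_add, map_zsmul, map_mul, hfix] at h₁ h₂
  simp [φ] at h₁ h₂
  have hγ1 : γ.natAbs ≤ 1 := by rcases hγ with rfl | rfl | rfl <;> simp
  simp only [map_intCast]
  rcases hβ with rfl | rfl | rfl
  · rcases hα with rfl | rfl | rfl
    · exact ⟨0, by simp, eq_of_zero_eq_one (by simpa using h₁.symm) _ _⟩
    · exact ⟨1, le_rfl, by linear_combination -h₁⟩
    · exact ⟨-1, le_rfl, by push_cast; linear_combination h₁⟩
  · exact ⟨-γ, by simpa using hγ1, by push_cast at h₂ ⊢; linear_combination -h₂⟩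
  · exact ⟨γ, hγ1, by push_cast at h₂; linear_combination h₂⟩

end IntModel

section Action

variable {ι A : Type*} [CommRing A] (D : MvPolynomial (ι × ℕ) A →+ MvPolynomial (ι × ℕ) A)
  (σ : A →+* A) (δ : A →+ A) {F : (ι × ℕ →₀ ℕ) → MvPolynomial (ι × ℕ) ℤ}

lemma coeff_apply_eq_sum
    (hC : ∀ a P, D (MvPolynomial.C a * P) = MvPolynomial.C (σ a) * D P + MvPolynomial.C (δ a) * P)
    (hF : ∀ m, D (MvPolynomial.monomial m 1) = MvPolynomial.map (Int.castRingHom A) (F m))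
    (Q : MvPolynomial (ι × ℕ) A) (m' : ι × ℕ →₀ ℕ) :
    (D Q).coeff m' = ∑ m ∈ Q.support, (F m).coeff m' • σ (Q.coeff m) + δ (Q.coeff m') := by
  classical
  have hterm : ∀ m, D (MvPolynomial.monomial m (Q.coeff m)) =
      MvPolynomial.C (σ (Q.coeff m)) * MvPolynomial.map (Int.castRingHom A) (F m) +
        MvPolynomial.C (δ (Q.coeff m)) * MvPolynomial.monomial m 1 := fun m => by
    rw [← hF, ← hC, MvPolynomial.C_mul_monomial, mul_one]
  conv_lhs => rw [Q.as_sum, map_sum]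
  simp only [hterm, MvPolynomial.coeff_sum, MvPolynomial.coeff_add, MvPolynomial.coeff_C_mul,
    MvPolynomial.coeff_map, MvPolynomial.coeff_monomial, Finset.sum_add_distrib, mul_ite, mul_one,
    mul_zero, Finset.sum_ite_eq']
  congr 1
  · exact Finset.sum_congr rfl fun m _ => by rw [zsmul_eq_mul, mul_comm]; rfl
  · split_ifs with h
    · rfl
    · rw [MvPolynomial.notMem_support_iff.mp h, map_zero]

lemma exists_shiftsTo_of_mem_support_apply
    (hC : ∀ a P, D (MvPolynomial.C a * P) = MvPolynomial.C (σ a) * D P + MvPolynomial.C (δ a) * P)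
    (hF : ∀ m, IsIntModel D m (F m)) {Q : MvPolynomial (ι × ℕ) A} {m' : ι × ℕ →₀ ℕ}
    (hm' : m' ∈ (D Q).support) : ∃ m ∈ Q.support, ShiftsTo m m' := by
  by_contra! h
  refine MvPolynomial.mem_support_iff.mp hm' ?_
  have hδ : δ (Q.coeff m') = 0 := by
    by_cases hm : m' ∈ Q.support
    · exact absurd (ShiftsTo.refl m') (h m' hm)
    · rw [MvPolynomial.notMem_support_iff.mp hm, map_zero]
  rw [coeff_apply_eq_sum D σ δ hC (fun m => (hF m).1), hδ, add_zero]
  refine Finset.sum_eq_zero fun m hm => ?_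
  rw [MvPolynomial.notMem_support_iff.mp fun hm'' => h m hm ((hF m).2.2 m' hm''), zero_smul]

lemma sum_natAbs_add_one_le_five_pow {S : Finset (ι × ℕ →₀ ℕ)} {s : ℕ} (hs : 1 ≤ s)
    (hS : ∀ m ∈ S, m.degree ≤ s) {m' : ι × ℕ →₀ ℕ} (z : (ι × ℕ →₀ ℕ) → ℤ)
    (hz : ∀ m, z m ≠ 0 → ShiftsTo m m') (hbound : ∀ m, (z m).natAbs ≤ coeffBound m.degree) :
    ∑ m ∈ S, (z m).natAbs + 1 ≤ 5 ^ s := by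
  classical
  set S' := S.filter fun m => z m ≠ 0
  have hsum : ∑ m ∈ S', (z m).natAbs = ∑ m ∈ S, (z m).natAbs :=
    Finset.sum_filter_of_ne fun m _ h => by simpa using h
  rw [← hsum]
  rcases S'.eq_empty_or_nonempty with hS' | ⟨m₀, hm₀⟩
  · rw [hS', Finset.sum_empty, zero_add]
    exact Nat.one_le_pow _ _ (by norm_num)
  have hshift : ∀ m ∈ S', ShiftsTo m m' := fun m hm => hz m (Finset.mem_filter.mp hm).2
  have hr : m'.degree ≤ s := (hshift m₀ hm₀).degree_eq ▸ hS m₀ (Finset.mem_filter.mp hm₀).1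
  calc ∑ m ∈ S', (z m).natAbs + 1 ≤ S'.card * coeffBound m'.degree + 1 := by
        gcongr
        exact Finset.sum_le_card_nsmul _ _ _ fun m hm => (hshift m hm).degree_eq ▸ hbound m
    _ ≤ 2 ^ m'.degree * coeffBound m'.degree + 1 := by
        gcongr
        exact card_le_two_pow_of_shiftsTo hshift
    _ ≤ 5 ^ s := two_pow_mul_coeffBound_add_one_le hr hs

lemma coeff_apply_mem_nsmul
    (hC : ∀ a P, D (MvPolynomial.C a * P) = MvPolynomial.C (σ a) * D P + MvPolynomial.C (δ a) * P)
    (hF : ∀ m, IsIntModel D m (F m)) {T T' : Set A} (hT'0 : 0 ∈ T')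
    (hT'neg : ∀ x ∈ T', -x ∈ T') (hσ : σ '' T ⊆ T') (hδ : δ '' T ⊆ T')
    {Q : MvPolynomial (ι × ℕ) A} {N s : ℕ} (hs : 1 ≤ s) (hQdeg : ∀ m ∈ Q.support, m.degree ≤ s)
    (hQ : ∀ m, Q.coeff m ∈ N • T) (m' : ι × ℕ →₀ ℕ) :
    (D Q).coeff m' ∈ (5 ^ s * N) • T' := by
  rw [coeff_apply_eq_sum D σ δ hC (fun m => (hF m).1)]
  have hsum := Set.sum_mem_nsmul fun m (_ : m ∈ Q.support) =>
    Set.zsmul_mem_nsmul hT'neg (Set.map_mem_nsmul σ hσ (hQ m)) ((F m).coeff m')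
  have hcount := sum_natAbs_add_one_le_five_pow hs hQdeg (fun m => (F m).coeff m')
    (fun m hm => (hF m).2.2 m' (MvPolynomial.mem_support_iff.mpr hm)) fun m => (hF m).2.1 m'
  have hle : ∑ m ∈ Q.support, ((F m).coeff m').natAbs * N + N ≤ 5 ^ s * N := by
    rw [← Finset.sum_mul]
    exact (add_one_mul _ N).symm.le.trans (Nat.mul_le_mul_right N hcount)
  refine Set.nsmul_subset_nsmul_right hT'0 hle ?_
  rw [add_nsmul]
  exact Set.add_mem_add hsum (Set.map_mem_nsmul δ hδ (hQ m'))

end Action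

end DFinite

lemma citer_nonneg {c : ℝ → ℝ → ℝ} (hc0 : ∀ a b, 0 ≤ c a b) {a b : ℝ} (hb : 0 ≤ b) :
    ∀ k, 0 ≤ citer c k a b
  | 0 => hb
  | _ + 1 => hc0 _ _

namespace DFinite

variable {R : Type*} [CommRing R] {n : ℕ}

lemma mvHeight_nonneg (H : HeightFn R) (P : MvR R n) : 0 ≤ mvHeight H P :=
  (Finset.le_fold_max 0).mpr (Or.inl le_rfl)

lemma hp_coeff_le_mvHeight (H : HeightFn R) (P : MvR R n) (m : Fin n × ℕ →₀ ℕ) :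
    H.hp (P.coeff m) ≤ mvHeight H P := by
  by_cases hm : m ∈ P.support
  · exact (Finset.le_fold_max _).mpr (Or.inr ⟨m, hm, le_rfl⟩)
  · rw [MvPolynomial.notMem_support_iff.mp hm, H.hp_zero]
    exact mvHeight_nonneg H P

lemma mvHeight_le (H : HeightFn R) (P : MvR R n) {B : ℝ} (hB : 0 ≤ B)
    (h : ∀ m ∈ P.support, H.hp (P.coeff m) ≤ B) : mvHeight H P ≤ B :=
  (Finset.fold_max_le B).mpr ⟨hB, h⟩

lemma natDegree_coeff_le_degx (P : MvR R n) (m : Fin n × ℕ →₀ ℕ) :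
    (P.coeff m).natDegree ≤ degx P := by
  by_cases hm : m ∈ P.support
  · exact Finset.le_sup (f := fun m => (P.coeff m).natDegree) hm
  · rw [MvPolynomial.notMem_support_iff.mp hm, natDegree_zero]
    exact Nat.zero_le _

lemma image_smallPolys_subset (H : HeightFn R) (σ : R[X] →+* R[X]) (δ : R[X] →+ R[X])
    (hσdeg : ∀ p, (σ p).degree ≤ p.degree) (hδdeg : ∀ p, (δ p).degree ≤ p.degree)
    {c : ℝ → ℝ → ℝ} (hc : ∀ (d B : ℝ) (p q : R[X]), (p.natDegree : ℝ) ≤ d →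
      (q.natDegree : ℝ) ≤ d → H.hp p ≤ B → H.hp q ≤ B →
      H.hp (σ p + δ q) ≤ c d B ∧ H.hp (-σ p + δ q) ≤ c d B)
    {d : ℕ} {B : ℝ} (hB : 0 ≤ B) :
    σ '' H.smallPolys d B ⊆ H.smallPolys d (c d B) ∧
      δ '' H.smallPolys d B ⊆ H.smallPolys d (c d B) := by
  have h0 : (0 : R[X]) ∈ H.smallPolys d B := H.zero_mem_smallPolys hB
  constructor
  · rintro _ ⟨p, ⟨hpd, hph⟩, rfl⟩
    refine ⟨(natDegree_le_natDegree (hσdeg p)).trans hpd, ?_⟩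
    simpa using (hc d B p 0 (by exact_mod_cast hpd) (by simp) hph h0.2).1
  · rintro _ ⟨p, ⟨hpd, hph⟩, rfl⟩
    refine ⟨(natDegree_le_natDegree (hδdeg p)).trans hpd, ?_⟩
    simpa using (hc d B 0 p (by simp) (by exact_mod_cast hpd) h0.2 hph).1

theorem iterate_apply_bounds (H : HeightFn R) (σ : R[X] →+* R[X]) (δ : R[X] →+ R[X])
    (hσdeg : ∀ p, (σ p).degree ≤ p.degree) (hδdeg : ∀ p, (δ p).degree ≤ p.degree)
    {c : ℝ → ℝ → ℝ} (hc0 : ∀ a b, 0 ≤ c a b)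
    (hc : ∀ (d B : ℝ) (p q : R[X]), (p.natDegree : ℝ) ≤ d →
      (q.natDegree : ℝ) ≤ d → H.hp p ≤ B → H.hp q ≤ B →
      H.hp (σ p + δ q) ≤ c d B ∧ H.hp (-σ p + δ q) ≤ c d B)
    (D : MvR R n →+ MvR R n)
    (hC : ∀ p P, D (MvPolynomial.C p * P) = MvPolynomial.C (σ p) * D P + MvPolynomial.C (δ p) * P)
    {F : (Fin n × ℕ →₀ ℕ) → MvPolynomial (Fin n × ℕ) ℤ} (hF : ∀ m, IsIntModel D m (F m))
    (P : MvR R n) (Dv : Fin n → ℕ) (hs : 1 ≤ ∑ i, Dv i)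
    (hPdeg : ∀ m ∈ P.support, ∀ i, gdeg i m ≤ Dv i)
    (Sv : Fin n → ℕ) (hPS : ∀ m ∈ P.support, ∀ v ∈ m.support, v.2 ≤ Sv v.1) (k : ℕ) :
    (∀ m ∈ (D^[k] P).support, (∀ v ∈ m.support, v.2 ≤ Sv v.1 + k) ∧ ∀ i, gdeg i m ≤ Dv i) ∧
      ∀ m, (D^[k] P).coeff m ∈
        5 ^ (k * ∑ i, Dv i) • H.smallPolys (degx P) (citer c k (degx P) (mvHeight H P)) := by
  induction k with
  | zero =>
    rw [Function.iterate_zero_apply, zero_mul, pow_zero, one_nsmul]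
    exact ⟨fun m hm => ⟨hPS m hm, hPdeg m hm⟩,
      fun m => ⟨natDegree_coeff_le_degx P m, hp_coeff_le_mvHeight H P m⟩⟩
  | succ k ih =>
    obtain ⟨hsupp, hcoeff⟩ := ih
    rw [Function.iterate_succ_apply']
    refine ⟨fun m' hm' => ?_, fun m' => ?_⟩
    · obtain ⟨m, hm, hshift⟩ := exists_shiftsTo_of_mem_support_apply D σ δ hC hF hm'
      refine ⟨fun v hv => ?_, fun i => hshift.gdeg_eq i ▸ (hsupp m hm).2 i⟩
      obtain ⟨w, hw, hw1, hw2⟩ := hshift.exists_mem_support hv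
      have := (hsupp m hm).1 w hw
      rw [hw1] at this
      omega
    · have hB := citer_nonneg hc0 (a := degx P) (mvHeight_nonneg H P) k
      obtain ⟨hσ, hδ⟩ := image_smallPolys_subset H σ δ hσdeg hδdeg hc (d := degx P) hB
      rw [add_one_mul, pow_add, mul_comm]
      exact coeff_apply_mem_nsmul D σ δ hC hF (H.zero_mem_smallPolys (hc0 _ _))
        (fun x hx => H.neg_mem_smallPolys hx) hσ hδ hs
        (fun m hm => (degree_eq_sum_gdeg m).trans_le
          (Finset.sum_le_sum fun i _ => (hsupp m hm).2 i)) hcoeff m'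

end DFinite

open DFinite MvPolynomial in
theorem partial_pow_action_bounds_general {R : Type*} [CommRing R]
    (H : HeightFn R) {n : ℕ}
    (σ : Polynomial R →+* Polynomial R) (δ : Polynomial R →+ Polynomial R)
    (hσdeg : ∀ p : Polynomial R, (σ p).degree ≤ p.degree)
    (hδdeg : ∀ p : Polynomial R, (δ p).degree ≤ p.degree)
    (c : ℝ → ℝ → ℝ)
    (hc0 : ∀ a b : ℝ, 0 ≤ c a b)
    (hc : ∀ (d B : ℝ) (p q : Polynomial R), (p.natDegree : ℝ) ≤ d →
      (q.natDegree : ℝ) ≤ d → H.hp p ≤ B → H.hp q ≤ B →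
      H.hp (σ p + δ q) ≤ c d B ∧ H.hp (-σ p + δ q) ≤ c d B)
    (α β γ : ℤ)
    (hα : α = 0 ∨ α = 1 ∨ α = -1) (hβ : β = 0 ∨ β = 1 ∨ β = -1)
    (hγ : γ = 0 ∨ γ = 1 ∨ γ = -1)
    (Dact : MvR R n →+ MvR R n)
    (hXrule : ∀ (i : Fin n) (j : ℕ), Dact (X (i, j)) = X (i, j + 1))
    (hCrule : ∀ (p : Polynomial R) (P : MvR R n),
      Dact (MvPolynomial.C p * P) = MvPolynomial.C (σ p) * Dact P + MvPolynomial.C (δ p) * P)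
    (hmul : ∀ P Q : MvR R n,
      Dact (P * Q) = α • (Dact P * Dact Q) + β • (Dact P * Q + P * Dact Q) + γ • (P * Q))
    (P : MvR R n) (Dv : Fin n → ℕ) (hDv : Dv ≠ 0)
    (hPdeg : ∀ m ∈ P.support, ∀ i, gdeg i m ≤ Dv i)
    (Sv : Fin n → ℕ) (hPS : ∀ m ∈ P.support, ∀ v ∈ m.support, v.2 ≤ Sv v.1)
    (k : ℕ) :
    (∀ m ∈ ((⇑Dact)^[k] P).support, ∀ v ∈ m.support, v.2 ≤ Sv v.1 + k) ∧
    (∀ m ∈ ((⇑Dact)^[k] P).support, ∀ i, gdeg i m ≤ Dv i) ∧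
    degx ((⇑Dact)^[k] P) ≤ degx P ∧
    mvHeight H ((⇑Dact)^[k] P) ≤
      (k : ℝ) * H.hN 4 * (∑ i, (Dv i : ℝ)) +
        citer c k (degx P : ℝ) (mvHeight H P) := by
  obtain ⟨i₀, hi₀⟩ := Function.ne_iff.mp hDv
  have hs : 1 ≤ ∑ i, Dv i := (Nat.one_le_iff_ne_zero.mpr hi₀).trans
    (Finset.single_le_sum (fun i _ => Nat.zero_le _) (Finset.mem_univ i₀))
  have habs : ∀ a : ℤ, (a = 0 ∨ a = 1 ∨ a = -1) → a.natAbs ≤ 1 := by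
    rintro a (rfl | rfl | rfl) <;> simp
  obtain ⟨ε, hε, h1⟩ := exists_apply_one_eq_C Dact i₀ hα hβ hγ hXrule hmul
  choose F hF using
    exists_isIntModel Dact (habs α hα) (habs β hβ) (habs γ hγ) hXrule hmul hε h1
  obtain ⟨hsupp, hcoeff⟩ :=
    iterate_apply_bounds H σ δ hσdeg hδdeg hc0 hc Dact hCrule hF P Dv hs hPdeg Sv hPS k
  refine ⟨fun m hm => (hsupp m hm).1, fun m hm => (hsupp m hm).2, Finset.sup_le fun m _ =>
    Polynomial.natDegree_le_of_mem_nsmul (fun q hq => hq.1) (hcoeff m), ?_⟩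
  have hB := citer_nonneg hc0 (a := degx P) (mvHeight_nonneg H P) k
  have hbound : ∀ m, H.hp (((⇑Dact)^[k] P).coeff m) ≤
      (k : ℝ) * H.hN 4 * (∑ i, (Dv i : ℝ)) + citer c k (degx P : ℝ) (mvHeight H P) := fun m => by
    have := H.hp_le_of_mem_five_pow_nsmul hB (k * ∑ i, Dv i)
      (Set.nsmul_subset_nsmul_left (fun q hq => hq.2) (hcoeff m))
    push_cast at this
    linarith
  exact mvHeight_le H _ ((H.hp_nonneg _).trans (hbound 0)) fun m _ => hbound m

open DFinite MvPolynomial in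
/-- bounds for `∂^k·P` in `𝐑 = R[x][y_{i,j}]`.  (i) the maximal
second index in each group grows by at most `k`; (ii) the `y`-multi-degree does not
increase; (iii) the `x`-degree does not increase; (iv) the height is bounded by
`k·h(4)·ΣD_i + c^{(k)}(deg_x P, h(P))`. -/
theorem partial_pow_action_bounds {R : Type*} [CommRing R] [IsDomain R]
    (H : HeightFn R) {n : ℕ}
    (σ : Polynomial R →+* Polynomial R) (δ : Polynomial R →+ Polynomial R)
    (leibniz : ∀ p q : Polynomial R, δ (p * q) = σ p * δ q + δ p * q)
    (hσdeg : ∀ p : Polynomial R, (σ p).degree ≤ p.degree)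
    (hδdeg : ∀ p : Polynomial R, (δ p).degree ≤ p.degree)
    (c : ℝ → ℝ → ℝ)
    (hc0 : ∀ a b : ℝ, 0 ≤ c a b)
    (hcmono : ∀ a₁ a₂ b₁ b₂ : ℝ, a₁ ≤ a₂ → b₁ ≤ b₂ → c a₁ b₁ ≤ c a₂ b₂)
    (hctri : ∀ a b₁ b₂ : ℝ, c a (b₁ + b₂) ≤ c a b₁ + c a b₂)
    (hc : ∀ (d B : ℝ) (p q : Polynomial R), (p.natDegree : ℝ) ≤ d →
      (q.natDegree : ℝ) ≤ d → H.hp p ≤ B → H.hp q ≤ B →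
      H.hp (σ p + δ q) ≤ c d B ∧ H.hp (-σ p + δ q) ≤ c d B)
    (α β γ : ℤ)
    (hα : α = 0 ∨ α = 1 ∨ α = -1) (hβ : β = 0 ∨ β = 1 ∨ β = -1)
    (hγ : γ = 0 ∨ γ = 1 ∨ γ = -1)
    (Dact : MvR R n →+ MvR R n)
    (hXrule : ∀ (i : Fin n) (j : ℕ), Dact (X (i, j)) = X (i, j + 1))
    (hCrule : ∀ (p : Polynomial R) (P : MvR R n),
      Dact (MvPolynomial.C p * P) = MvPolynomial.C (σ p) * Dact P + MvPolynomial.C (δ p) * P)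
    (hmul : ∀ P Q : MvR R n,
      Dact (P * Q) = α • (Dact P * Dact Q) + β • (Dact P * Q + P * Dact Q) + γ • (P * Q))
    (P : MvR R n) (Dv : Fin n → ℕ) (hDv : Dv ≠ 0)
    (hPdeg : ∀ m ∈ P.support, ∀ i, gdeg i m ≤ Dv i)
    (Sv : Fin n → ℕ) (hPS : ∀ m ∈ P.support, ∀ v ∈ m.support, v.2 ≤ Sv v.1)
    (k : ℕ) :
    (∀ m ∈ ((⇑Dact)^[k] P).support, ∀ v ∈ m.support, v.2 ≤ Sv v.1 + k) ∧
    (∀ m ∈ ((⇑Dact)^[k] P).support, ∀ i, gdeg i m ≤ Dv i) ∧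
    degx ((⇑Dact)^[k] P) ≤ degx P ∧
    mvHeight H ((⇑Dact)^[k] P) ≤
      (k : ℝ) * H.hN 4 * (∑ i, (Dv i : ℝ)) +
        citer c k (degx P : ℝ) (mvHeight H P) :=
  partial_pow_action_bounds_general H σ δ hσdeg hδdeg c hc0 hc α β γ hα hβ hγ Dact hXrule hCrule
    hmul P Dv hDv hPdeg Sv hPS k
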